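/- arXiv:2402.08435 — 5 statements merged into one kernel-verified Lean document; each statement's English description precedes it below -/
import Mathlib

section
/- For every i in ℤ, A_i A_i† = I − Σ_{k>i} A_k† A_k, where the series converges in the strong operator topology on the weakly monotone Fock space. -/
/-!
Write `C k` for the creation operator `A_k†`. In the basis `b`, `C k (C k)†` is the coordinate
projection onto the basis vectors whose top index is `k`, and `(C i)† C i` the one onto the
basis vectors on which `i` can still be created, i.e. whose top index is at most `i`. Hence
`I - (C i)† C i` projects onto the basis vectors with top index `> i`, a set that is the disjoint
union over `k > i` of the sets with top index `k`; regrouping the basis expansion of `x` by top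
index gives the series.
-/

open scoped ComplexOrder

/-- Index set for the orthonormal basis of the weakly monotone Fock space over `ℓ²(ℤ)`:
decreasing (finite) lists of integers; the empty list corresponds to the vacuum. -/
def WMIdx : Type := {l : List ℤ // l.Chain' (· ≥ ·)}

/-- `i` may be created on top of the tensor indexed by `l`. -/
def WMIdx.ok (i : ℤ) (l : WMIdx) : Prop := ∀ j ∈ l.1.head?, i ≥ j

def WMIdx.cons (i : ℤ) (l : WMIdx) (h : WMIdx.ok i l) : WMIdx :=
  ⟨i :: l.1, List.isChain_cons.mpr ⟨h, l.2⟩⟩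

def WMIdx.vac : WMIdx := ⟨[], List.isChain_nil⟩

open Function
open ContinuousLinearMap (adjoint adjoint_inner_right)
open scoped InnerProductSpace

theorem HasSum.sigma_of_iUnion_eq {α β E : Type*} [AddCommMonoid E] [TopologicalSpace E]
    [ContinuousAdd E] [RegularSpace E] {f : β → E} {s : Set β} {t : α → Set β}
    (ht : Pairwise (Disjoint on t)) (hts : ⋃ k, t k = s) {a : E} {g : α → E}
    (hf : HasSum (fun x : s => f x) a) (hg : ∀ k, HasSum (fun x : t k => f x) (g k)) :
    HasSum g a := by
  subst hts
  exact ((Set.unionEqSigmaOfDisjoint ht).symm.hasSum_iff.mpr hf).sigma hg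

namespace HilbertBasis

variable {ι 𝕜 E : Type*} [RCLike 𝕜] [NormedAddCommGroup E] [InnerProductSpace 𝕜 E]
  (b : HilbertBasis ι 𝕜 E)

theorem ext_inner {u v : E} (h : ∀ j, ⟪b j, u⟫_𝕜 = ⟪b j, v⟫_𝕜) : u = v :=
  b.repr.injective <| lp.ext <| funext fun j => by
    rw [b.repr_apply_apply, b.repr_apply_apply, h]

theorem inner_eq_ite [DecidableEq ι] (i j : ι) : ⟪b i, b j⟫_𝕜 = if i = j then 1 else 0 :=
  orthonormal_iff_ite.mp b.orthonormal i j

theorem hasSum_subtype_of_apply_eq_indicator {s : Set ι} {T : E →L[𝕜] E}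
    (hT : ∀ m, T (b m) = s.indicator b m) (x : E) :
    HasSum (fun m : s => b.repr x m • b m) (T x) := by
  refine (hasSum_subtype_iff_indicator (f := fun m => b.repr x m • b m)).mpr ?_
  convert T.hasSum (b.hasSum_repr x) using 1
  ext m
  rw [map_smul, hT, Set.indicator_smul_apply]

end HilbertBasis

namespace WMIdx

theorem cons_inj {k : ℤ} {j l : WMIdx} (hj : ok k j) (hl : ok k l) :
    cons k j hj = cons k l hl ↔ j = l := by
  refine ⟨fun h => Subtype.ext ?_, fun h => by subst h; rfl⟩
  simpa [cons] using congrArg Subtype.val h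

theorem exists_eq_cons_of_head?_eq {n : WMIdx} {k : ℤ} (hn : n.1.head? = some k) :
    ∃ l h, n = cons k l h := by
  obtain ⟨_ | ⟨a, t⟩, hchain⟩ := n
  · cases hn
  · obtain rfl : a = k := Option.some_injective _ hn
    obtain ⟨hok, ht⟩ := List.isChain_cons.mp hchain
    exact ⟨⟨t, ht⟩, hok, rfl⟩

theorem iUnion_setOf_head?_eq (i : ℤ) :
    ⋃ k : {k : ℤ // i < k}, {n : WMIdx | n.1.head? = some k.1} = {m | ok i m}ᶜ := by
  ext m
  simp [ok, Option.mem_def, and_comm]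

theorem pairwise_disjoint_setOf_head?_eq (i : ℤ) :
    Pairwise (Disjoint on fun k : {k : ℤ // i < k} => {n : WMIdx | n.1.head? = some k.1}) :=
  fun _ _ hne => Set.disjoint_left.mpr fun _ h h' =>
    hne (Subtype.ext (Option.some_injective _ (h.symm.trans h')))

end WMIdx

section CreationOperators

variable {H : Type*} [NormedAddCommGroup H] [InnerProductSpace ℂ H] [CompleteSpace H]
  {b : HilbertBasis WMIdx ℂ H} {C : ℤ → H →L[ℂ] H}
  (hC : ∀ i l (h : WMIdx.ok i l), C i (b l) = b (WMIdx.cons i l h))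
  (hC0 : ∀ i l, ¬ WMIdx.ok i l → C i (b l) = 0)
include hC hC0

theorem adjoint_apply_basis_cons (k : ℤ) (l : WMIdx) (h : WMIdx.ok k l) :
    adjoint (C k) (b (WMIdx.cons k l h)) = b l := by
  classical
  refine b.ext_inner fun j => ?_
  rw [adjoint_inner_right]
  by_cases hj : WMIdx.ok k j
  · simp only [hC k j hj, b.inner_eq_ite, WMIdx.cons_inj]
  · rw [hC0 k j hj, inner_zero_left, b.inner_eq_ite, if_neg (by rintro rfl; exact hj h)]

theorem adjoint_apply_basis_of_head?_ne (k : ℤ) (n : WMIdx) (hn : n.1.head? ≠ some k) :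
    adjoint (C k) (b n) = 0 := by
  classical
  refine b.ext_inner fun j => ?_
  rw [adjoint_inner_right, inner_zero_right]
  by_cases hj : WMIdx.ok k j
  · rw [hC k j hj, b.inner_eq_ite, if_neg (by rintro rfl; exact hn rfl)]
  · rw [hC0 k j hj, inner_zero_left]

theorem apply_adjoint_apply_basis (k : ℤ) (n : WMIdx) :
    C k (adjoint (C k) (b n)) = {n : WMIdx | n.1.head? = some k}.indicator b n := by
  classical
  rw [Set.indicator_apply]
  split_ifs with hn
  · obtain ⟨l, h, rfl⟩ := WMIdx.exists_eq_cons_of_head?_eq hn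
    rw [adjoint_apply_basis_cons hC hC0, hC]
  · rw [adjoint_apply_basis_of_head?_ne hC hC0 k n hn, map_zero]

theorem adjoint_apply_apply_basis (i : ℤ) (m : WMIdx) :
    adjoint (C i) (C i (b m)) = {m | WMIdx.ok i m}.indicator b m := by
  classical
  rw [Set.indicator_apply]
  split_ifs with hm
  · rw [hC i m hm, adjoint_apply_basis_cons hC hC0]
  · rw [hC0 i m hm, map_zero]

end CreationOperators

/-- `A_i A_i† = I − Σ_{k>i} A_k† A_k`, the series converging in the strong
operator topology: for every vector `x`, the family `(A_k† A_k x)_{k>i}` is summable with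
sum `x − A_i A_i† x`. -/
theorem wm_range_projection_series {H : Type} [NormedAddCommGroup H] [InnerProductSpace ℂ H] [CompleteSpace H]
    (b : HilbertBasis WMIdx ℂ H) (C : ℤ → H →L[ℂ] H)
    (hC : ∀ i l (h : WMIdx.ok i l), C i (b l) = b (WMIdx.cons i l h))
    (hC0 : ∀ i l, ¬ WMIdx.ok i l → C i (b l) = 0)
    (i : ℤ) (x : H) :
    HasSum (fun k : {k : ℤ // i < k} => (C k.1) ((ContinuousLinearMap.adjoint (C k.1)) x))
      (x - (ContinuousLinearMap.adjoint (C i)) ((C i) x)) := by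
  have hcompl : HasSum (fun m : ({m | WMIdx.ok i m}ᶜ : Set WMIdx) => b.repr x m • b m)
      ((1 - adjoint (C i) ∘L C i) x) :=
    b.hasSum_subtype_of_apply_eq_indicator (fun m => by
      rw [Set.indicator_compl, Pi.sub_apply, ← adjoint_apply_apply_basis hC hC0]
      rfl) x
  have hfiber (k : {k : ℤ // i < k}) :
      HasSum (fun m : {n : WMIdx | n.1.head? = some k.1} => b.repr x m • b m)
        ((C k ∘L adjoint (C k)) x) :=
    b.hasSum_subtype_of_apply_eq_indicator (apply_adjoint_apply_basis hC hC0 k) x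
  exact HasSum.sigma_of_iUnion_eq (f := fun m => b.repr x m • b m)
    (WMIdx.pairwise_disjoint_setOf_head?_eq i) (WMIdx.iUnion_setOf_head?_eq i) hcompl hfiber
end

section
/- The closed two-sided ideal of the weakly monotone C*-algebra W generated by the set {A_i² : i ∈ ℤ} equals the whole algebra W. -/
open scoped ComplexOrder

/-!
Creating `i` twice and annihilating once is the same as creating `i` once: `A_i C_i² = C_i`,
because `C_i` maps every basis vector to `0` or to a tensor on which `i` can be created again,
and `A_i` undoes `C_i` on such tensors. Taking adjoints, `A_i² A_i^* = A_i`, so `A_i = A_i² A_i^*`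
lies in any ideal containing `A_i²`, and then so does `A_i^* = (A_i A_i^*) A_i^*`. The same
factorisations put all scalar multiples of `A_i` and `A_i^*` in the ideal, so the closed ideal
contains the closure of the *-algebra they generate, which is `W`.
-/

namespace TwoSidedIdeal

section NonAssoc

variable (k : Type*) {R : Type*} [CommSemiring k] [NonUnitalNonAssocRing R] [Module k R]

/-- In a non-unital algebra a two-sided ideal need not be closed under scalars; this is the
largest `k`-submodule contained in it. -/
def smulCore [SMulCommClass k R R] (I : TwoSidedIdeal R) : NonUnitalSubalgebra k R where
  carrier := {x | ∀ c : k, c • x ∈ I}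
  add_mem' hx hy c := by simpa only [smul_add] using I.add_mem (hx c) (hy c)
  zero_mem' c := by simpa only [smul_zero] using I.zero_mem
  mul_mem' {x _} _ hy c := by simpa only [mul_smul_comm] using I.mul_mem_left x _ (hy c)
  smul_mem' r _ hx c := by simpa only [smul_smul] using hx (c * r)

variable {k} [SMulCommClass k R R] (I : TwoSidedIdeal R)

lemma mem_of_mem_smulCore {x : R} (hx : x ∈ I.smulCore k) : x ∈ I := by
  simpa only [one_smul] using hx 1

lemma mul_mem_smulCore [IsScalarTower k R R] (y : R) {z : R} (hz : z ∈ I) :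
    y * z ∈ I.smulCore k := fun c =>
  smul_mul_assoc c y z ▸ I.mul_mem_left _ _ hz

lemma isClosed_smulCore [TopologicalSpace R] [ContinuousConstSMul k R]
    (hI : IsClosed {x : R | x ∈ I}) : IsClosed (I.smulCore k : Set R) := by
  have : (I.smulCore k : Set R) = ⋂ c : k, (c • · : R → R) ⁻¹' {x | x ∈ I} := by
    ext x
    simp only [Set.mem_iInter]
    rfl
  exact this ▸ isClosed_iInter fun c => hI.preimage (continuous_const_smul c)

end NonAssoc

lemma self_and_star_mem_smulCore {k R : Type*} [CommSemiring k] [NonUnitalRing R] [StarRing R]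
    [Module k R] [IsScalarTower k R R] [SMulCommClass k R R] (I : TwoSidedIdeal R) {a : R}
    (ha : a * a * star a = a) (hsq : a * a ∈ I) :
    a ∈ I.smulCore k ∧ star a ∈ I.smulCore k := by
  have ha' : a * star a * star a = star a := by
    simpa only [star_mul, star_star, ← mul_assoc] using congrArg star ha
  have haI : a ∈ I := ha ▸ I.mul_mem_right _ _ hsq
  have hstarI : star a ∈ I := ha' ▸ I.mul_mem_right _ _ (I.mul_mem_right _ _ haI)
  exact ⟨ha ▸ I.mul_mem_smulCore _ hstarI, ha' ▸ I.mul_mem_smulCore _ hstarI⟩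

end TwoSidedIdeal

section Density

variable {k A : Type*} [CommSemiring k] [StarRing k] [TopologicalSpace A] [NonUnitalSemiring A]
  [StarRing A] [Module k A] [StarModule k A] [IsScalarTower k A A] [SMulCommClass k A A]
  [ContinuousStar A] [ContinuousConstSMul k A] [IsSemitopologicalSemiring A]

lemma NonUnitalSubalgebra.eq_top_of_isClosed_of_generators_mem {s : Set A}
    (J : NonUnitalSubalgebra k (NonUnitalStarAlgebra.adjoin k s).topologicalClosure)
    (hJ : IsClosed (SetLike.coe J))
    (hs : ∀ x : (NonUnitalStarAlgebra.adjoin k s).topologicalClosure,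
      (x : A) ∈ s ∪ star s → x ∈ J) :
    J = ⊤ := by
  let J' := J.map (NonUnitalSubalgebraClass.subtype _)
  have hadjoin : (NonUnitalStarAlgebra.adjoin k s : Set A) ⊆ J' :=
    NonUnitalAlgebra.adjoin_le fun x hx => ⟨⟨x, NonUnitalStarSubalgebra.le_topologicalClosure _
      (NonUnitalAlgebra.subset_adjoin k hx)⟩, hs _ hx, rfl⟩
  have hclosed : IsClosed (J' : Set A) :=
    (NonUnitalStarAlgebra.adjoin k s).isClosed_topologicalClosure
      |>.isClosedEmbedding_subtypeVal.isClosedMap _ hJ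
  refine eq_top_iff.mpr fun x _ => ?_
  obtain ⟨y, hy, hyx⟩ := closure_minimal hadjoin hclosed x.2
  exact Subtype.ext hyx ▸ hy

end Density

lemma WMIdx.ok_cons_self (i : ℤ) (l : WMIdx) (h : WMIdx.ok i l) :
    WMIdx.ok i (WMIdx.cons i l h) := by
  intro j hj
  simp only [WMIdx.cons, List.head?_cons, Option.mem_def, Option.some.injEq] at hj
  exact hj ▸ le_rfl

lemma WMIdx.cons_inj_s5 {i : ℤ} {l m : WMIdx} (hl : WMIdx.ok i l) (hm : WMIdx.ok i m) :
    WMIdx.cons i m hm = WMIdx.cons i l hl ↔ m = l :=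
  ⟨fun e => Subtype.ext (List.cons_injective (congrArg Subtype.val e)), by rintro rfl; rfl⟩

section FockSpace

variable {H : Type} [NormedAddCommGroup H] [InnerProductSpace ℂ H] [CompleteSpace H]
  {b : HilbertBasis WMIdx ℂ H} {C : ℤ → H →L[ℂ] H}

lemma WMIdx.adjoint_creation_apply_cons
    (hC : ∀ i l (h : WMIdx.ok i l), C i (b l) = b (WMIdx.cons i l h))
    (hC0 : ∀ i l, ¬ WMIdx.ok i l → C i (b l) = 0) (i : ℤ) (l : WMIdx) (h : WMIdx.ok i l) :
    (C i).adjoint (b (WMIdx.cons i l h)) = b l := by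
  classical
  have horth := orthonormal_iff_ite.mp b.orthonormal
  refine b.repr.injective ?_
  ext m
  rw [b.repr_apply_apply, b.repr_apply_apply, ContinuousLinearMap.adjoint_inner_right]
  by_cases hm : WMIdx.ok i m
  · simp only [hC i m hm, horth, WMIdx.cons_inj_s5]
  · rw [hC0 i m hm, inner_zero_left, horth, if_neg (by rintro rfl; exact hm h)]

lemma WMIdx.adjoint_mul_mul_self_eq_self
    (hC : ∀ i l (h : WMIdx.ok i l), C i (b l) = b (WMIdx.cons i l h))
    (hC0 : ∀ i l, ¬ WMIdx.ok i l → C i (b l) = 0) (i : ℤ) :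
    (C i).adjoint * (C i * C i) = C i := by
  refine ContinuousLinearMap.ext_on
    (Submodule.dense_iff_topologicalClosure_eq_top.mpr b.dense_span) ?_
  rintro _ ⟨l, rfl⟩
  by_cases hl : WMIdx.ok i l
  · simp only [mul_apply_eq_comp, hC i l hl, hC i _ (WMIdx.ok_cons_self i l hl),
      WMIdx.adjoint_creation_apply_cons hC hC0]
  · simp only [mul_apply_eq_comp, hC0 i l hl, map_zero]

end FockSpace

/-- the closed two-sided ideal of the weakly monotone C*-algebra `W`
(the norm closure of the *-algebra generated by the annihilators `A_i = (C i)^*`)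
generated by `{A_i² : i ∈ ℤ}` is all of `W`: every closed two-sided ideal of `W`
containing all the `A_i²` is the whole algebra. -/
theorem wm_ideal_of_squares_is_everything {H : Type} [NormedAddCommGroup H] [InnerProductSpace ℂ H] [CompleteSpace H]
    (b : HilbertBasis WMIdx ℂ H) (C : ℤ → H →L[ℂ] H)
    (hC : ∀ i l (h : WMIdx.ok i l), C i (b l) = b (WMIdx.cons i l h))
    (hC0 : ∀ i l, ¬ WMIdx.ok i l → C i (b l) = 0)
    (W : NonUnitalStarSubalgebra ℂ (H →L[ℂ] H))
    (hW : W = (NonUnitalStarAlgebra.adjoin ℂ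
        (Set.range fun i : ℤ => ContinuousLinearMap.adjoint (C i))).topologicalClosure)
    (I : TwoSidedIdeal W)
    (hIclosed : IsClosed {x : W | x ∈ I})
    (hsq : ∀ (i : ℤ)
      (h : (ContinuousLinearMap.adjoint (C i) * ContinuousLinearMap.adjoint (C i) :
          H →L[ℂ] H) ∈ W),
      (⟨_, h⟩ : W) ∈ I) :
    ∀ x : W, x ∈ I := by
  let a (i : ℤ) : W := ⟨(C i).adjoint, hW ▸ NonUnitalStarSubalgebra.le_topologicalClosure _
    (NonUnitalStarAlgebra.subset_adjoin ℂ _ ⟨i, rfl⟩)⟩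
  have ha (i : ℤ) : a i * a i * star (a i) = a i := Subtype.ext <| by
    show (C i).adjoint * (C i).adjoint * star (C i).adjoint = (C i).adjoint
    simpa only [star_mul, ContinuousLinearMap.star_eq_adjoint, ContinuousLinearMap.adjoint_adjoint,
      ← mul_assoc] using congrArg star (WMIdx.adjoint_mul_mul_self_eq_self hC hC0 i)
  have hcore (i : ℤ) : a i ∈ I.smulCore ℂ ∧ star (a i) ∈ I.smulCore ℂ :=
    I.self_and_star_mem_smulCore (ha i) (hsq i _)
  have htop : I.smulCore ℂ = ⊤ := by
    subst hW
    refine (I.smulCore ℂ).eq_top_of_isClosed_of_generators_mem (I.isClosed_smulCore hIclosed) ?_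
    rintro x (⟨i, hi⟩ | ⟨i, hi⟩)
    · exact (Subtype.ext hi.symm : x = a i) ▸ (hcore i).1
    · have hx : x = star (a i) := Subtype.ext ((star_star _).symm.trans (congrArg star hi).symm)
      exact hx ▸ (hcore i).2
  exact fun x => I.mem_of_mem_smulCore (htop ▸ NonUnitalAlgebra.mem_top)
end

section
/- In any *-algebra quotient of the weakly monotone *-algebra in which every ρ(A_i²) = 0, one has ρ(A_i) = 0 for all i ∈ ℤ; hence the two-sided ideal of the weakly monotone *-algebra W₀ generated by {A_i² : i ∈ ℤ} equals W₀. -/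
open scoped ComplexOrder

/-! The annihilator `A_i = (C i)†` inverts the creation operator `C i` wherever `i` can be
created, i.e. `A_i C_i b_l = b_l` when `i ≥ head l`, and it kills `b_l` when `i < head l`, since
then the top index of `l` is not `i`. Evaluating on the basis gives `A_i = A_i² A_i†`, and taking
adjoints `A_i† = A_i (A_i†)²`. So anything killing the squares `A_i²` kills `A_i` and `A_i†`,
the generators of `W₀`. -/

open scoped InnerProductSpace

namespace HilbertBasis

variable {ι 𝕜 E F : Type*} [RCLike 𝕜] [NormedAddCommGroup E] [InnerProductSpace 𝕜 E]
  (b : HilbertBasis ι 𝕜 E)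

theorem ext_inner_left {x y : E} (h : ∀ k, ⟪b k, x⟫_𝕜 = ⟪b k, y⟫_𝕜) : x = y :=
  b.repr.injective <| lp.ext <| funext fun k => by
    simpa only [HilbertBasis.repr_apply_apply] using h k

theorem continuousLinearMap_ext [TopologicalSpace F] [AddCommGroup F] [Module 𝕜 F] [T2Space F]
    {S T : E →L[𝕜] F} (h : ∀ k, S (b k) = T (b k)) : S = T :=
  ContinuousLinearMap.ext_on (Submodule.dense_iff_topologicalClosure_eq_top.mpr b.dense_span) <| by
    rintro _ ⟨k, rfl⟩
    exact h k

theorem adjoint_apply_eq_of_inner [CompleteSpace E] (T : E →L[𝕜] E) {v w : E}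
    (h : ∀ k, ⟪T (b k), v⟫_𝕜 = ⟪b k, w⟫_𝕜) : ContinuousLinearMap.adjoint T v = w :=
  b.ext_inner_left fun k => by rw [ContinuousLinearMap.adjoint_inner_right, h]

end HilbertBasis

namespace TwoSidedIdeal

variable {R A : Type*} [CommRing R] [StarRing R] [NonUnitalRing A] [StarRing A] [Module R A]
  [IsScalarTower R A A] [SMulCommClass R A A] [StarModule R A]

/-- A two-sided ideal of a non-unital algebra need not be closed under scalars, hence the
hypothesis on all scalar multiples of the generators. -/
theorem eq_top_of_smul_generators_mem {s : Set A}
    (I : TwoSidedIdeal (NonUnitalStarAlgebra.adjoin R s))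
    (hI : ∀ a (ha : a ∈ NonUnitalStarAlgebra.adjoin R s), a ∈ s ∪ star s →
      ∀ c : R, c • (⟨a, ha⟩ : NonUnitalStarAlgebra.adjoin R s) ∈ I) :
    I = ⊤ := by
  suffices h : ∀ x (hx : x ∈ NonUnitalAlgebra.adjoin R (s ∪ star s)) (c : R),
      c • (⟨x, hx⟩ : NonUnitalStarAlgebra.adjoin R s) ∈ I from
    eq_top_iff.2 fun x _ => by simpa using h x.1 x.2 1
  intro x hx
  induction hx using NonUnitalAlgebra.adjoin_induction with
  | mem a ha => exact hI a _ ha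
  | add x y hx hy ihx ihy =>
    intro c
    show c • ((⟨x, hx⟩ : NonUnitalStarAlgebra.adjoin R s) + ⟨y, hy⟩) ∈ I
    rw [smul_add]
    exact I.add_mem (ihx c) (ihy c)
  | zero =>
    intro c
    show c • (0 : NonUnitalStarAlgebra.adjoin R s) ∈ I
    rw [smul_zero]
    exact I.zero_mem
  | mul x y hx hy ihx _ =>
    intro c
    show c • ((⟨x, hx⟩ : NonUnitalStarAlgebra.adjoin R s) * ⟨y, hy⟩) ∈ I
    rw [← smul_mul_assoc]
    exact I.mul_mem_right _ _ (ihx c)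
  | smul r x hx ihx =>
    intro c
    show c • r • (⟨x, hx⟩ : NonUnitalStarAlgebra.adjoin R s) ∈ I
    rw [smul_smul]
    exact ihx (c * r)

end TwoSidedIdeal

namespace WMIdx

theorem cons_injective {i : ℤ} {l m : WMIdx} {hl : ok i l} {hm : ok i m}
    (h : cons i l hl = cons i m hm) : l = m :=
  Subtype.ext (List.cons_injective (congrArg Subtype.val h))

theorem ok_cons_self_s6 (i : ℤ) (l : WMIdx) (h : ok i l) : ok i (cons i l h) := by
  simp [ok, cons]

end WMIdx

section WeaklyMonotone

variable {H : Type*} [NormedAddCommGroup H] [InnerProductSpace ℂ H] [CompleteSpace H]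
  (b : HilbertBasis WMIdx ℂ H) (C : ℤ → H →L[ℂ] H)
  (hC : ∀ i l (h : WMIdx.ok i l), C i (b l) = b (WMIdx.cons i l h))
  (hC0 : ∀ i l, ¬ WMIdx.ok i l → C i (b l) = 0)

include hC hC0

theorem wm_adjoint_apply_cons (i : ℤ) (l : WMIdx) (h : WMIdx.ok i l) :
    ContinuousLinearMap.adjoint (C i) (b (WMIdx.cons i l h)) = b l := by
  refine b.adjoint_apply_eq_of_inner _ fun k => ?_
  by_cases hk : WMIdx.ok i k
  · rw [hC i k hk]
    by_cases hkl : k = l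
    · subst hkl
      rw [inner_self_eq_one_of_norm_eq_one (b.orthonormal.1 _),
        inner_self_eq_one_of_norm_eq_one (b.orthonormal.1 _)]
    · rw [b.orthonormal.inner_eq_zero hkl,
        b.orthonormal.inner_eq_zero (mt WMIdx.cons_injective hkl)]
  · have hkl : k ≠ l := fun e => hk (e ▸ h)
    rw [hC0 i k hk, inner_zero_left, b.orthonormal.inner_eq_zero hkl]

theorem wm_adjoint_apply_of_not_ok (i : ℤ) (l : WMIdx) (hl : ¬ WMIdx.ok i l) :
    ContinuousLinearMap.adjoint (C i) (b l) = 0 := by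
  refine b.adjoint_apply_eq_of_inner _ fun k => ?_
  rw [inner_zero_right]
  by_cases hk : WMIdx.ok i k
  · have hkl : WMIdx.cons i k hk ≠ l := fun e => hl (e ▸ WMIdx.ok_cons_self_s6 i k hk)
    rw [hC i k hk, b.orthonormal.inner_eq_zero hkl]
  · rw [hC0 i k hk, inner_zero_left]

theorem wm_adjoint_eq_adjoint_mul_adjoint_mul (i : ℤ) :
    ContinuousLinearMap.adjoint (C i) =
      ContinuousLinearMap.adjoint (C i) * ContinuousLinearMap.adjoint (C i) * C i := by
  refine b.continuousLinearMap_ext fun l => ?_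
  rw [mul_apply_eq_comp, mul_apply_eq_comp]
  by_cases h : WMIdx.ok i l
  · rw [hC i l h, wm_adjoint_apply_cons b C hC hC0 i l h]
  · rw [hC0 i l h, map_zero, map_zero, wm_adjoint_apply_of_not_ok b C hC hC0 i l h]

end WeaklyMonotone

/-- if `ρ` is a *-algebra homomorphism from the weakly monotone *-algebra
`W₀` (generated by the annihilators `A_i = (C i)^*`) killing every `A_i²`, then it kills
every `A_i`; consequently, every two-sided ideal of `W₀` containing all `A_i²` is all
of `W₀`. -/
theorem wm_star_algebra_ideal_of_squares {H : Type} [NormedAddCommGroup H] [InnerProductSpace ℂ H] [CompleteSpace H]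
    (b : HilbertBasis WMIdx ℂ H) (C : ℤ → H →L[ℂ] H)
    (hC : ∀ i l (h : WMIdx.ok i l), C i (b l) = b (WMIdx.cons i l h))
    (hC0 : ∀ i l, ¬ WMIdx.ok i l → C i (b l) = 0)
    (W₀ : NonUnitalStarSubalgebra ℂ (H →L[ℂ] H))
    (hW₀ : W₀ = NonUnitalStarAlgebra.adjoin ℂ
        (Set.range fun i : ℤ => ContinuousLinearMap.adjoint (C i))) :
    (∀ (B : Type) [NonUnitalRing B] [StarRing B] [Module ℂ B]
      (ρ : W₀ →⋆ₙₐ[ℂ] B),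
      (∀ (i : ℤ)
        (h : (ContinuousLinearMap.adjoint (C i) * ContinuousLinearMap.adjoint (C i) :
            H →L[ℂ] H) ∈ W₀),
        ρ ⟨_, h⟩ = 0) →
      ∀ (i : ℤ) (h : ContinuousLinearMap.adjoint (C i) ∈ W₀), ρ ⟨_, h⟩ = 0) ∧
    (∀ (I : TwoSidedIdeal W₀),
      (∀ (i : ℤ)
        (h : (ContinuousLinearMap.adjoint (C i) * ContinuousLinearMap.adjoint (C i) :
            H →L[ℂ] H) ∈ W₀),
        (⟨_, h⟩ : W₀) ∈ I) →
      ∀ x : W₀, x ∈ I) := by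
  subst hW₀
  set W := NonUnitalStarAlgebra.adjoin ℂ (Set.range fun i : ℤ => ContinuousLinearMap.adjoint (C i))
  have hA (i : ℤ) : ContinuousLinearMap.adjoint (C i) ∈ W :=
    NonUnitalStarAlgebra.subset_adjoin ℂ _ ⟨i, rfl⟩
  let a (i : ℤ) : W := ⟨_, hA i⟩
  have ha (i : ℤ) : a i = a i * a i * star (a i) :=
    Subtype.ext <| (wm_adjoint_eq_adjoint_mul_adjoint_mul b C hC hC0 i).trans <|
      congrArg (_ * ·) (ContinuousLinearMap.adjoint_adjoint (C i)).symm
  have ha_star (i : ℤ) : star (a i) = a i * (star (a i) * star (a i)) := by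
    simpa only [star_mul, star_star, mul_assoc] using congrArg star (ha i)
  refine ⟨fun B _ _ _ ρ hsq i _ => ?_, fun I hsq => ?_⟩
  · show ρ (a i) = 0
    rw [ha i, map_mul, show ρ (a i * a i) = 0 from hsq i _, zero_mul]
  · have hsmul_a (i : ℤ) (c : ℂ) : c • a i ∈ I := by
      rw [ha i, ← mul_smul_comm]
      exact I.mul_mem_right _ _ (hsq i _)
    have hI : I = ⊤ := by
      refine TwoSidedIdeal.eq_top_of_smul_generators_mem I fun x hx hgen c => ?_
      obtain ⟨i, rfl⟩ | ⟨i, hi⟩ := hgen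
      · exact hsmul_a i c
      · obtain rfl : x = star (ContinuousLinearMap.adjoint (C i)) := by
          rw [← star_star x, ← hi]
        show c • star (a i) ∈ I
        rw [ha_star i, ← smul_mul_assoc]
        exact I.mul_mem_right _ _ (hsmul_a i c)
    exact fun x => hI ▸ trivial
end

section
/- The orthogonal projection P_Ω onto the vacuum vector Ω does not belong to the weakly monotone C*-algebra W (the norm closure of the *-algebra generated by the annihilators A_i, i ∈ ℤ, on the weakly monotone Fock space over ℓ²(ℤ)). -/
open scoped ComplexOrder

/-!
Let `U j` be the isometry of the Fock space that appends a particle `j` at the bottom of each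
basis tensor whenever the result is still weakly decreasing (and fixes the tensor otherwise).
For `j < i` the bottom position is invisible to `A i` and its adjoint, so `U j` commutes with
both; hence every element `Y` of the *-algebra generated by the annihilators commutes with
`U j` for all sufficiently negative `j`. For such `j` the vector states of `Ω` and of the
one-particle vector `U j Ω = e_j` agree on `Y`, whereas they take the values `1` and `0` on
`P_Ω`. As vector states of unit vectors have norm at most one, `‖P_Ω - Y‖ ≥ 1/2`.
-/

open Filter
open scoped InnerProductSpace

section EventualCommutant

variable (R : Type*) {A ι : Type*} [CommSemiring R] [Semiring A] [Algebra R A]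

def Subalgebra.eventualCommutant (l : Filter ι) (u : ι → A) : Subalgebra R A where
  carrier := {a | ∀ᶠ j in l, Commute a (u j)}
  mul_mem' ha hb := (ha.and hb).mono fun _ h => h.1.mul_left h.2
  add_mem' ha hb := (ha.and hb).mono fun _ h => h.1.add_left h.2
  algebraMap_mem' r := Eventually.of_forall fun _ => Algebra.commute_algebraMap_left r _

variable {R}

lemma NonUnitalStarAlgebra.adjoin_le_eventualCommutant [StarRing R] [StarRing A]
    [StarModule R A] {l : Filter ι} {u : ι → A} {s : Set A}
    (hs : ∀ a ∈ s, a ∈ Subalgebra.eventualCommutant R l u ∧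
      star a ∈ Subalgebra.eventualCommutant R l u) :
    (adjoin R s).toNonUnitalSubalgebra ≤
      (Subalgebra.eventualCommutant R l u).toNonUnitalSubalgebra := by
  rw [adjoin_toNonUnitalSubalgebra]
  refine NonUnitalAlgebra.adjoin_le ?_
  rintro a (ha | ha)
  · exact (hs a ha).1
  · simpa using (hs (star a) ha).2

end EventualCommutant

section InnerProductSpace

variable {𝕜 E : Type*} [RCLike 𝕜] [NormedAddCommGroup E] [InnerProductSpace 𝕜 E]

lemma ContinuousLinearMap.norm_inner_apply_self_le {x : E} (hx : ‖x‖ = 1) (T : E →L[𝕜] E) :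
    ‖⟪x, T x⟫_𝕜‖ ≤ ‖T‖ :=
  calc ‖⟪x, T x⟫_𝕜‖ ≤ ‖x‖ * (‖T‖ * ‖x‖) :=
        (norm_inner_le_norm _ _).trans (by gcongr; exact T.le_opNorm x)
    _ = ‖T‖ := by rw [hx]; ring

lemma ContinuousLinearMap.norm_inner_apply_self_sub_le {x y : E} (hx : ‖x‖ = 1) (hy : ‖y‖ = 1)
    (S T : E →L[𝕜] E) (hT : ⟪x, T x⟫_𝕜 = ⟪y, T y⟫_𝕜) :
    ‖⟪x, S x⟫_𝕜 - ⟪y, S y⟫_𝕜‖ ≤ 2 * ‖S - T‖ :=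
  calc ‖⟪x, S x⟫_𝕜 - ⟪y, S y⟫_𝕜‖ = ‖⟪x, (S - T) x⟫_𝕜 - ⟪y, (S - T) y⟫_𝕜‖ := by
        simp only [sub_apply, inner_sub_right, hT, sub_sub_sub_cancel_right]
    _ ≤ ‖S - T‖ + ‖S - T‖ := (norm_sub_le _ _).trans
        (add_le_add (norm_inner_apply_self_le hx _) (norm_inner_apply_self_le hy _))
    _ = 2 * ‖S - T‖ := by ring

namespace HilbertBasis

variable {ι F : Type*} [NormedAddCommGroup F] [InnerProductSpace 𝕜 F]

noncomputable def linearIsometryOfOrthonormal [CompleteSpace F] (b : HilbertBasis ι 𝕜 E)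
    {v : ι → F} (hv : Orthonormal 𝕜 v) : E →ₗᵢ[𝕜] F :=
  hv.orthogonalFamily.linearIsometry.comp b.repr.toLinearIsometry

lemma linearIsometryOfOrthonormal_apply [CompleteSpace F] (b : HilbertBasis ι 𝕜 E)
    {v : ι → F} (hv : Orthonormal 𝕜 v) (i : ι) : b.linearIsometryOfOrthonormal hv (b i) = v i := by
  classical
  rw [linearIsometryOfOrthonormal, LinearIsometry.coe_comp, Function.comp_apply,
    LinearIsometryEquiv.coe_toLinearIsometry, ← b.repr_symm_single,
    LinearIsometryEquiv.apply_symm_apply, OrthogonalFamily.linearIsometry_apply_single,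
    LinearIsometry.toSpanSingleton_apply, one_smul]

lemma ext_inner_s7 (b : HilbertBasis ι 𝕜 E) {x y : E} (h : ∀ i, ⟪b i, x⟫_𝕜 = ⟪b i, y⟫_𝕜) : x = y :=
  b.repr.injective <| lp.ext <| funext fun i => by simp only [b.repr_apply_apply, h]

lemma ext_continuousLinearMap (b : HilbertBasis ι 𝕜 E) {S T : E →L[𝕜] F}
    (h : ∀ i, S (b i) = T (b i)) : S = T :=
  ContinuousLinearMap.ext_on (Submodule.dense_iff_topologicalClosure_eq_top.2 b.dense_span)
    (by rintro _ ⟨i, rfl⟩; exact h i)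

end HilbertBasis

end InnerProductSpace

namespace WMIdx

def Snocable (j : ℤ) (l : WMIdx) : Prop := ∀ k ∈ l.1, j ≤ k

lemma isChain_append_singleton {j : ℤ} {l : WMIdx} (h : Snocable j l) :
    (l.1 ++ [j]).IsChain (· ≥ ·) :=
  List.isChain_append.2 ⟨l.2, List.isChain_singleton j, fun x hx y hy => by
    obtain rfl : j = y := by simpa using hy
    exact h x (List.mem_of_mem_getLast? hx)⟩

open Classical in
noncomputable def trySnoc (j : ℤ) (l : WMIdx) : WMIdx :=
  if h : Snocable j l then ⟨l.1 ++ [j], isChain_append_singleton h⟩ else l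

lemma val_trySnoc_of_snocable {j : ℤ} {l : WMIdx} (h : Snocable j l) :
    (trySnoc j l).1 = l.1 ++ [j] := by
  simp [trySnoc, h]

lemma trySnoc_of_not_snocable {j : ℤ} {l : WMIdx} (h : ¬ Snocable j l) : trySnoc j l = l := by
  simp [trySnoc, h]

lemma snocable_trySnoc_iff {j : ℤ} {l : WMIdx} : Snocable j (trySnoc j l) ↔ Snocable j l := by
  by_cases h : Snocable j l
  · simp only [Snocable, val_trySnoc_of_snocable h, List.mem_append, List.mem_singleton]
    exact ⟨fun h' k hk => h' k (.inl hk), fun _ k hk => hk.elim (h k) (fun e => e ▸ le_rfl)⟩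
  · rw [trySnoc_of_not_snocable h]

lemma trySnoc_injective (j : ℤ) : Function.Injective (trySnoc j) := by
  intro a c hac
  have hs : Snocable j a ↔ Snocable j c := by
    rw [← snocable_trySnoc_iff, hac, snocable_trySnoc_iff]
  by_cases ha : Snocable j a
  · have hval := congrArg Subtype.val hac
    rw [val_trySnoc_of_snocable ha, val_trySnoc_of_snocable (hs.1 ha)] at hval
    exact Subtype.ext (List.append_cancel_right hval)
  · rwa [trySnoc_of_not_snocable ha, trySnoc_of_not_snocable (hs.not.1 ha)] at hac

lemma trySnoc_vac_ne (j : ℤ) : trySnoc j vac ≠ vac := by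
  intro h
  have hval := val_trySnoc_of_snocable (j := j) (l := vac) (by simp [Snocable, vac])
  rw [h] at hval
  simp [vac] at hval

lemma ok_trySnoc_iff {i j : ℤ} (hij : j ≤ i) (l : WMIdx) : ok i (trySnoc j l) ↔ ok i l := by
  by_cases h : Snocable j l
  · unfold ok
    rw [val_trySnoc_of_snocable h]
    cases l.1 <;> simp [hij]
  · rw [trySnoc_of_not_snocable h]

lemma snocable_cons_iff {i j : ℤ} (hij : j ≤ i) (l : WMIdx) (h : ok i l) :
    Snocable j (cons i l h) ↔ Snocable j l := by
  simp [Snocable, cons, hij]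

lemma trySnoc_cons {i j : ℤ} (hij : j ≤ i) (l : WMIdx) (h : ok i l) :
    trySnoc j (cons i l h) = cons i (trySnoc j l) ((ok_trySnoc_iff hij l).2 h) := by
  apply Subtype.ext
  change (trySnoc j (cons i l h)).1 = i :: (trySnoc j l).1
  by_cases hl : Snocable j l
  · rw [val_trySnoc_of_snocable ((snocable_cons_iff hij l h).2 hl), val_trySnoc_of_snocable hl]
    rfl
  · rw [trySnoc_of_not_snocable (mt (snocable_cons_iff hij l h).1 hl),
      trySnoc_of_not_snocable hl]
    rfl

lemma head?_trySnoc_eq_some_iff {i j : ℤ} (hij : j < i) (l : WMIdx) :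
    (trySnoc j l).1.head? = some i ↔ l.1.head? = some i := by
  by_cases h : Snocable j l
  · rw [val_trySnoc_of_snocable h]
    cases l.1 <;> simp [hij.ne]
  · rw [trySnoc_of_not_snocable h]

lemma exists_eq_cons_of_head? {l : WMIdx} {i : ℤ} (hl : l.1.head? = some i) :
    ∃ (t : WMIdx) (h : ok i t), l = cons i t h := by
  obtain ⟨u, hu⟩ := List.head?_eq_some_iff.1 hl
  have hc := List.isChain_cons.1 (hu ▸ l.2)
  exact ⟨⟨u, hc.2⟩, hc.1, Subtype.ext hu⟩

section Operators

open ContinuousLinearMap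

variable {H : Type} [NormedAddCommGroup H] [InnerProductSpace ℂ H] [CompleteSpace H]
  (b : HilbertBasis WMIdx ℂ H)

noncomputable def snocIsometry (j : ℤ) : H →ₗᵢ[ℂ] H :=
  b.linearIsometryOfOrthonormal (b.orthonormal.comp _ (trySnoc_injective j))

lemma snocIsometry_apply_basis (j : ℤ) (l : WMIdx) : snocIsometry b j (b l) = b (trySnoc j l) :=
  b.linearIsometryOfOrthonormal_apply _ l

variable {b} {C : ℤ → H →L[ℂ] H}
  (hC : ∀ i l (h : ok i l), C i (b l) = b (cons i l h))
  (hC0 : ∀ i l, ¬ ok i l → C i (b l) = 0)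
include hC hC0

lemma adjoint_apply_cons (i : ℤ) (t : WMIdx) (h : ok i t) :
    adjoint (C i) (b (cons i t h)) = b t := by
  classical
  refine b.ext_inner_s7 fun m => ?_
  rw [adjoint_inner_right, orthonormal_iff_ite.1 b.orthonormal m t]
  by_cases hm : ok i m
  · rw [hC i m hm, orthonormal_iff_ite.1 b.orthonormal]
    refine if_congr ⟨fun e => ?_, fun e => ?_⟩ rfl rfl
    · exact Subtype.ext (List.cons_injective (congrArg Subtype.val e))
    · subst e
      rfl
  · rw [hC0 i m hm, inner_zero_left, if_neg]
    rintro rfl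
    exact hm h

lemma adjoint_apply_of_head?_ne (i : ℤ) (l : WMIdx) (hl : l.1.head? ≠ some i) :
    adjoint (C i) (b l) = 0 := by
  classical
  refine b.ext_inner_s7 fun m => ?_
  rw [adjoint_inner_right, inner_zero_right]
  by_cases hm : ok i m
  · rw [hC i m hm, orthonormal_iff_ite.1 b.orthonormal, if_neg]
    rintro rfl
    exact hl rfl
  · rw [hC0 i m hm, inner_zero_left]

lemma commute_creation_snocIsometry {i j : ℤ} (hij : j < i) :
    Commute (C i) (snocIsometry b j).toContinuousLinearMap := by
  refine b.ext_continuousLinearMap fun l => ?_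
  rw [mul_apply_eq_comp, mul_apply_eq_comp,
    LinearIsometry.coe_toContinuousLinearMap, snocIsometry_apply_basis]
  by_cases hl : ok i l
  · rw [hC i l hl, hC i _ ((ok_trySnoc_iff hij.le l).2 hl), snocIsometry_apply_basis,
      trySnoc_cons hij.le]
  · rw [hC0 i l hl, hC0 i _ (mt (ok_trySnoc_iff hij.le l).1 hl), map_zero]

lemma commute_adjoint_creation_snocIsometry {i j : ℤ} (hij : j < i) :
    Commute (adjoint (C i)) (snocIsometry b j).toContinuousLinearMap := by
  refine b.ext_continuousLinearMap fun l => ?_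
  rw [mul_apply_eq_comp, mul_apply_eq_comp,
    LinearIsometry.coe_toContinuousLinearMap, snocIsometry_apply_basis]
  by_cases hl : l.1.head? = some i
  · obtain ⟨t, ht, rfl⟩ := exists_eq_cons_of_head? hl
    rw [trySnoc_cons hij.le, adjoint_apply_cons hC hC0, adjoint_apply_cons hC hC0,
      snocIsometry_apply_basis]
  · rw [adjoint_apply_of_head?_ne hC hC0 i l hl, map_zero,
      adjoint_apply_of_head?_ne hC hC0 i _ (mt (head?_trySnoc_eq_some_iff hij l).1 hl)]

lemma eventually_commute_snocIsometry_of_mem_adjoin {Y : H →L[ℂ] H}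
    (hY : Y ∈ NonUnitalStarAlgebra.adjoin ℂ (Set.range fun i => adjoint (C i))) :
    ∀ᶠ j in atBot, Commute Y (snocIsometry b j).toContinuousLinearMap :=
  NonUnitalStarAlgebra.adjoin_le_eventualCommutant (by
    rintro _ ⟨i, rfl⟩
    refine ⟨(eventually_lt_atBot i).mono fun j hj => ?_,
      (eventually_lt_atBot i).mono fun j hj => ?_⟩
    · exact commute_adjoint_creation_snocIsometry hC hC0 hj
    · rw [star_eq_adjoint, adjoint_adjoint]
      exact commute_creation_snocIsometry hC hC0 hj) hY

end Operators

end WMIdx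

open WMIdx in
/-- the rank-one projection `P_Ω` onto the vacuum does not belong to the
weakly monotone C*-algebra `W`, the norm closure of the *-algebra generated by the
annihilators `A_i = (C i)^*`. -/
theorem wm_vacuum_projection_not_in_algebra {H : Type} [NormedAddCommGroup H] [InnerProductSpace ℂ H] [CompleteSpace H]
    (b : HilbertBasis WMIdx ℂ H) (C : ℤ → H →L[ℂ] H)
    (hC : ∀ i l (h : WMIdx.ok i l), C i (b l) = b (WMIdx.cons i l h))
    (hC0 : ∀ i l, ¬ WMIdx.ok i l → C i (b l) = 0) :
    ((innerSL ℂ (b WMIdx.vac)).smulRight (b WMIdx.vac) : H →L[ℂ] H) ∉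
      (NonUnitalStarAlgebra.adjoin ℂ
        (Set.range fun i : ℤ => ContinuousLinearMap.adjoint (C i))).topologicalClosure := by
  set P : H →L[ℂ] H := (innerSL ℂ (b vac)).smulRight (b vac)
  intro hP
  obtain ⟨Y, hY, hPY⟩ := Metric.mem_closure_iff.1 hP (1 / 2) one_half_pos
  obtain ⟨j, hj⟩ := (eventually_commute_snocIsometry_of_mem_adjoin hC hC0 hY).exists
  set U := snocIsometry b j
  set ξ := b (trySnoc j vac)
  have hY_vac : ⟪b vac, Y (b vac)⟫_ℂ = ⟪ξ, Y ξ⟫_ℂ := by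
    have hUΩ : U (b vac) = ξ := snocIsometry_apply_basis b j vac
    have hYU : Y (U (b vac)) = U (Y (b vac)) := congrArg (· (b vac)) hj.eq
    rw [← hUΩ, hYU, U.inner_map_map]
  have hP_apply (x : H) : ⟪x, P x⟫_ℂ = ⟪b vac, x⟫_ℂ * ⟪x, b vac⟫_ℂ := by
    simp [P, mul_comm]
  have hvac_ξ : ⟪b vac, ξ⟫_ℂ = 0 := b.orthonormal.2 (trySnoc_vac_ne j).symm
  have : (1 : ℝ) < 1 :=
    calc (1 : ℝ) = ‖⟪b vac, P (b vac)⟫_ℂ - ⟪ξ, P ξ⟫_ℂ‖ := by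
          simp [hP_apply, hvac_ξ, b.orthonormal.1 vac]
      _ ≤ 2 * ‖P - Y‖ := ContinuousLinearMap.norm_inner_apply_self_sub_le
          (b.orthonormal.1 _) (b.orthonormal.1 _) P Y hY_vac
      _ < 1 := by rw [← dist_eq_norm]; linarith
  exact lt_irrefl _ this
end

section
/- If η_1, …, η_n are vectors all lying in a common k-particle subspace (k ≥ 1) of the weakly monotone Fock space over ℓ²(ℤ), then ‖Σ_{j=1}^n A_j† η_j‖² = Σ_{j=1}^n ‖A_j† η_j‖² ≤ n · max_{1≤j≤n} ‖η_j‖². -/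
open scoped ComplexOrder

/-!
The creator `A_i†` sends the basis tensor `e_l` either to `0` or to the basis tensor `e_{i :: l}`,
and `(i, l) ↦ i :: l` is injective. Hence the images of basis vectors under any two creators are
orthogonal unless they come from the same pair `(i, l)`. By density of the span of the basis,
the ranges of `A_i†` and `A_j†` are orthogonal for `i ≠ j`, which is the Pythagorean identity,
and each `A_i†` is a contraction, which gives the estimate.
-/

open scoped InnerProductSpace

section Pythagoras

variable {𝕜 E ι : Type*} [RCLike 𝕜] [NormedAddCommGroup E] [InnerProductSpace 𝕜 E]

theorem norm_sum_sq_eq_sum_norm_sq_of_pairwise_inner_eq_zero {v : ι → E}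
    (hv : Pairwise fun i j => ⟪v i, v j⟫_𝕜 = 0) (s : Finset ι) :
    ‖∑ i ∈ s, v i‖ ^ 2 = ∑ i ∈ s, ‖v i‖ ^ 2 := by
  classical
  induction s using Finset.induction_on with
  | empty => simp
  | insert i s hi ih =>
    have hperp : ⟪v i, ∑ j ∈ s, v j⟫_𝕜 = 0 := by
      rw [inner_sum]
      exact Finset.sum_eq_zero fun j hj => hv (ne_of_mem_of_not_mem hj hi).symm
    rw [Finset.sum_insert hi, Finset.sum_insert hi, sq, sq,
      norm_add_sq_eq_norm_sq_add_norm_sq_of_inner_eq_zero _ _ hperp, ← sq, ← sq, ih]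

theorem norm_sum_smul_sq_eq_of_pairwise_inner_eq_zero {w : ι → E}
    (hw : Pairwise fun i j => ⟪w i, w j⟫_𝕜 = 0) (c : ι → 𝕜) (s : Finset ι) :
    ‖∑ i ∈ s, c i • w i‖ ^ 2 = ∑ i ∈ s, ‖c i‖ ^ 2 * ‖w i‖ ^ 2 := by
  rw [norm_sum_sq_eq_sum_norm_sq_of_pairwise_inner_eq_zero (𝕜 := 𝕜)
    (fun i j hij => by simp only [inner_smul_left, inner_smul_right, hw hij, mul_zero]) s]
  simp_rw [norm_smul, mul_pow]

end Pythagoras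

namespace HilbertBasis

variable {𝕜 E F ι : Type*} [RCLike 𝕜] [NormedAddCommGroup E] [InnerProductSpace 𝕜 E]
  [NormedAddCommGroup F] [InnerProductSpace 𝕜 F] (b : HilbertBasis ι 𝕜 E)

theorem ext_continuousLinearMap_s9 {G : Type*} [AddCommGroup G] [Module 𝕜 G] [TopologicalSpace G]
    [T2Space G] {f g : E →L[𝕜] G} (h : ∀ i, f (b i) = g (b i)) : f = g :=
  ContinuousLinearMap.ext_on (Submodule.dense_iff_topologicalClosure_eq_top.mpr b.dense_span)
    (Set.forall_mem_range.mpr h)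

theorem inner_map_map_eq_zero {S T : E →L[𝕜] F} (h : ∀ i j, ⟪S (b i), T (b j)⟫_𝕜 = 0)
    (x y : E) : ⟪S x, T y⟫_𝕜 = 0 := by
  have hbasis_left : ∀ i y, ⟪S (b i), T y⟫_𝕜 = 0 := fun i =>
    DFunLike.congr_fun (b.ext_continuousLinearMap_s9 (f := (innerSL 𝕜 (S (b i))).comp T) (g := 0)
      (h i))
  have hswap : (innerSL 𝕜 (T y)).comp S = 0 :=
    b.ext_continuousLinearMap_s9 fun i => by
      simpa using inner_eq_zero_symm.mp (hbasis_left i y)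
  exact inner_eq_zero_symm.mp (by simpa using DFunLike.congr_fun hswap x)

theorem norm_map_le_norm {T : E →L[𝕜] F} (horth : Pairwise fun i j => ⟪T (b i), T (b j)⟫_𝕜 = 0)
    (hle : ∀ i, ‖T (b i)‖ ≤ 1) (x : E) : ‖T x‖ ≤ ‖x‖ := by
  have hpartial : ∀ s : Finset ι,
      ‖T (∑ i ∈ s, b.repr x i • b i)‖ ≤ ‖∑ i ∈ s, b.repr x i • b i‖ := by
    intro s
    rw [← sq_le_sq₀ (norm_nonneg _) (norm_nonneg _), map_sum]
    simp only [map_smul]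
    rw [norm_sum_smul_sq_eq_of_pairwise_inner_eq_zero horth,
      norm_sum_smul_sq_eq_of_pairwise_inner_eq_zero b.orthonormal.2]
    refine Finset.sum_le_sum fun i _ => ?_
    rw [b.orthonormal.1 i, one_pow, mul_one]
    exact mul_le_of_le_one_right (by positivity) (pow_le_one₀ (norm_nonneg _) (hle i))
  have hx := b.hasSum_repr x
  exact le_of_tendsto_of_tendsto' ((T.continuous.tendsto x).comp hx).norm hx.norm hpartial

end HilbertBasis

theorem WMIdx.cons_inj_s9 {i i' : ℤ} {l l' : WMIdx} {h : WMIdx.ok i l} {h' : WMIdx.ok i' l'}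
    (heq : WMIdx.cons i l h = WMIdx.cons i' l' h') : i = i' ∧ l = l' := by
  obtain ⟨hi, hl⟩ := List.cons_eq_cons.mp (congrArg Subtype.val heq)
  exact ⟨hi, Subtype.ext hl⟩

section Creation

variable {H : Type} [NormedAddCommGroup H] [InnerProductSpace ℂ H]
  (b : HilbertBasis WMIdx ℂ H) (C : ℤ → H →L[ℂ] H)

theorem inner_creation_basis_eq_zero
    (hC : ∀ i l (h : WMIdx.ok i l), C i (b l) = b (WMIdx.cons i l h))
    (hC0 : ∀ i l, ¬ WMIdx.ok i l → C i (b l) = 0)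
    {i i' : ℤ} {l l' : WMIdx} (hne : (i, l) ≠ (i', l')) :
    ⟪C i (b l), C i' (b l')⟫_ℂ = 0 := by
  by_cases h : WMIdx.ok i l
  · by_cases h' : WMIdx.ok i' l'
    · rw [hC i l h, hC i' l' h']
      refine b.orthonormal.2 fun heq => hne ?_
      obtain ⟨rfl, rfl⟩ := WMIdx.cons_inj_s9 heq
      rfl
    · rw [hC0 i' l' h', inner_zero_right]
  · rw [hC0 i l h, inner_zero_left]

theorem norm_creation_basis_le_one
    (hC : ∀ i l (h : WMIdx.ok i l), C i (b l) = b (WMIdx.cons i l h))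
    (hC0 : ∀ i l, ¬ WMIdx.ok i l → C i (b l) = 0) (i : ℤ) (l : WMIdx) :
    ‖C i (b l)‖ ≤ 1 := by
  by_cases h : WMIdx.ok i l
  · rw [hC i l h, b.orthonormal.1]
  · rw [hC0 i l h, norm_zero]
    exact zero_le_one

end Creation

theorem wm_orthogonality_estimate_general {H : Type} [NormedAddCommGroup H] [InnerProductSpace ℂ H]
    (b : HilbertBasis WMIdx ℂ H) (C : ℤ → H →L[ℂ] H)
    (hC : ∀ i l (h : WMIdx.ok i l), C i (b l) = b (WMIdx.cons i l h))
    (hC0 : ∀ i l, ¬ WMIdx.ok i l → C i (b l) = 0)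
    (n : ℕ) (η : Fin n → H) :
    ‖∑ j : Fin n, C ((j : ℤ) + 1) (η j)‖ ^ 2
        = ∑ j : Fin n, ‖C ((j : ℤ) + 1) (η j)‖ ^ 2 ∧
      ‖∑ j : Fin n, C ((j : ℤ) + 1) (η j)‖ ^ 2 ≤ n * ⨆ j : Fin n, ‖η j‖ ^ 2 := by
  have horth : Pairwise fun j j' : Fin n =>
      ⟪C ((j : ℤ) + 1) (η j), C ((j' : ℤ) + 1) (η j')⟫_ℂ = 0 := fun j j' hne =>
    b.inner_map_map_eq_zero (fun l l' => inner_creation_basis_eq_zero b C hC hC0 fun heq =>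
      hne (Fin.ext (by simp only [Prod.mk.injEq] at heq; omega))) _ _
  have hpythagoras := norm_sum_sq_eq_sum_norm_sq_of_pairwise_inner_eq_zero horth Finset.univ
  refine ⟨hpythagoras, ?_⟩
  have hbdd : BddAbove (Set.range fun j : Fin n => ‖η j‖ ^ 2) := (Set.finite_range _).bddAbove
  calc ‖∑ j : Fin n, C ((j : ℤ) + 1) (η j)‖ ^ 2
      = ∑ j : Fin n, ‖C ((j : ℤ) + 1) (η j)‖ ^ 2 := hpythagoras
    _ ≤ ∑ _j : Fin n, ⨆ j : Fin n, ‖η j‖ ^ 2 := Finset.sum_le_sum fun j _ =>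
        (pow_le_pow_left₀ (norm_nonneg _) (b.norm_map_le_norm
          (fun l l' hll => inner_creation_basis_eq_zero b C hC hC0 (by simpa using hll))
          (norm_creation_basis_le_one b C hC hC0 _) (η j)) 2).trans (le_ciSup hbdd j)
    _ = n * ⨆ j : Fin n, ‖η j‖ ^ 2 := by simp

/-- if `η_1, …, η_n` all lie in a common `k`-particle subspace (`k ≥ 1`),
then `‖Σ_j A_j† η_j‖² = Σ_j ‖A_j† η_j‖² ≤ n · max_j ‖η_j‖²` (creators with indices
`1, …, n`). -/
theorem wm_orthogonality_estimate {H : Type} [NormedAddCommGroup H] [InnerProductSpace ℂ H] [CompleteSpace H]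
    (b : HilbertBasis WMIdx ℂ H) (C : ℤ → H →L[ℂ] H)
    (hC : ∀ i l (h : WMIdx.ok i l), C i (b l) = b (WMIdx.cons i l h))
    (hC0 : ∀ i l, ¬ WMIdx.ok i l → C i (b l) = 0)
    (k : ℕ) (hk : 1 ≤ k) (n : ℕ) (η : Fin n → H)
    (hη : ∀ j, η j ∈ (Submodule.span ℂ
      {v : H | ∃ l : WMIdx, l.1.length = k ∧ v = b l}).topologicalClosure) :
    ‖∑ j : Fin n, C ((j : ℤ) + 1) (η j)‖ ^ 2
        = ∑ j : Fin n, ‖C ((j : ℤ) + 1) (η j)‖ ^ 2 ∧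
      ‖∑ j : Fin n, C ((j : ℤ) + 1) (η j)‖ ^ 2 ≤ n * ⨆ j : Fin n, ‖η j‖ ^ 2 :=
  wm_orthogonality_estimate_general b C hC hC0 n η
end
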